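/- Let A ∈ ℂ, A ≠ 0, and let G(t, u, v) be a formal power series in three variables over ℂ. Then the formal differential equation A·(t u' + u) = t · G(t, u, t u') has at most one solution u ∈ ℂ[[t]] with u(0) = 0, and such a solution exists; its coefficients are determined recursively: A(k+1) u_k equals a polynomial expression in u_1, …, u_{k−1} and the coefficients of G. -/

import Mathlib

open PowerSeries

/-! Since `t u'` multiplies the coefficient of `t^n` by `n`, comparing coefficients of `t^(N+1)`
turns the equation into `A (N + 2) u_(N+1) = [t^N] G(t, u, t u')`, whose right-hand side only
involves `u_0, …, u_N`; so the coefficients are forced one at a time, and the recursion they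
satisfy defines a solution. -/

/-- Substitution `G(t, u, t·u')` of `t`, a power series `u` with zero constant term,
and `t·u'` into a formal power series `G` in three variables, defined coefficientwise
(for `u` with zero constant term only finitely many monomials of `G` contribute to each
coefficient). -/
noncomputable def substG (G : MvPowerSeries (Fin 3) ℂ) (u : PowerSeries ℂ) :
    PowerSeries ℂ :=
  PowerSeries.mk fun N =>
    ∑ i ∈ Finset.range (N + 1), ∑ j ∈ Finset.range (N + 1), ∑ k ∈ Finset.range (N + 1),
      MvPowerSeries.coeff (Finsupp.equivFunOnFinite.symm ![i, j, k]) G *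
        PowerSeries.coeff N
          (PowerSeries.X ^ i * u ^ j * (PowerSeries.X * d⁄dX ℂ u) ^ k)

section Recursion

variable {R : Type*} [Semiring R]

noncomputable def recursiveCoeff (c : R) (F : ℕ → R⟦X⟧ → R) : ℕ → R
  | 0 => c
  | N + 1 => F N (mk fun n => if _ : n ≤ N then recursiveCoeff c F n else 0)

theorem existsUnique_coeff_succ_eq (c : R) (F : ℕ → R⟦X⟧ → R)
    (hF : ∀ N u v, (∀ n ≤ N, coeff n u = coeff n v) → F N u = F N v) :
    ∃! u : R⟦X⟧, coeff 0 u = c ∧ ∀ N, coeff (N + 1) u = F N u := by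
  refine ⟨mk (recursiveCoeff c F), ⟨?_, fun N => ?_⟩, ?_⟩
  · simp [recursiveCoeff]
  · rw [coeff_mk, recursiveCoeff]
    exact hF N _ _ fun n hn => by simp [hn]
  · rintro v ⟨hv0, hv⟩
    ext N
    induction N using Nat.strong_induction_on with
    | _ N ih =>
      cases N with
      | zero => simp [hv0, recursiveCoeff]
      | succ N =>
        rw [hv, coeff_mk, recursiveCoeff]
        exact hF N _ _ fun n hn => by simp [hn, ih n (by omega)]

end Recursion

theorem coeff_X_mul_derivative {R : Type*} [CommSemiring R] (f : R⟦X⟧) (n : ℕ) :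
    coeff n (X * d⁄dX R f) = n * coeff n f := by
  cases n with
  | zero => simp
  | succ n =>
    rw [coeff_succ_X_mul, coeff_derivative]
    push_cast
    ring

theorem coeff_substG_congr (G : MvPowerSeries (Fin 3) ℂ) {u v : ℂ⟦X⟧} {M : ℕ}
    (h : ∀ n ≤ M, coeff n u = coeff n v) :
    coeff M (substG G u) = coeff M (substG G v) := by
  let π := Ideal.Quotient.mk (Ideal.span {(X : ℂ⟦X⟧) ^ (M + 1)})
  have hπ : ∀ f g, π f = π g ↔ ∀ n ≤ M, coeff n f = coeff n g := by
    intro f g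
    simp only [π, Ideal.Quotient.eq, Ideal.mem_span_singleton, X_pow_dvd_iff, map_sub,
      sub_eq_zero, Nat.lt_succ_iff]
  have hu : π u = π v := (hπ u v).2 h
  have hδu : π (X * d⁄dX ℂ u) = π (X * d⁄dX ℂ v) :=
    (hπ _ _).2 fun n hn => by simp only [coeff_X_mul_derivative, h n hn]
  simp only [substG, coeff_mk]
  refine Finset.sum_congr rfl fun i _ => Finset.sum_congr rfl fun j _ =>
    Finset.sum_congr rfl fun k _ => congrArg _ ?_
  exact (hπ _ _).1 (by simp only [map_mul, map_pow, hu, hδu]) M le_rfl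

theorem solution_iff_coeff_succ_eq {A : ℂ} (hA : A ≠ 0) (G : MvPowerSeries (Fin 3) ℂ)
    (u : ℂ⟦X⟧) :
    (constantCoeff u = 0 ∧ A • (X * d⁄dX ℂ u + u) = X * substG G u) ↔
      coeff 0 u = 0 ∧ ∀ N : ℕ, coeff (N + 1) u = coeff N (substG G u) / (A * (N + 2)) := by
  have hcoeff : ∀ n : ℕ, coeff n (A • (X * d⁄dX ℂ u + u)) = A * (n + 1) * coeff n u := by
    intro n
    rw [map_smul, map_add, coeff_X_mul_derivative, smul_eq_mul]
    ring
  have hN : ∀ N : ℕ, A * (N + 2) ≠ 0 := fun N =>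
    mul_ne_zero hA (by exact_mod_cast (N + 1).succ_ne_zero)
  rw [← coeff_zero_eq_constantCoeff_apply, PowerSeries.ext_iff]
  refine and_congr_right fun h0 => ⟨fun h N => ?_, fun h n => ?_⟩
  · rw [eq_div_iff (hN N), ← coeff_succ_X_mul (n := N) (substG G u), ← h, hcoeff]
    push_cast
    ring
  · cases n with
    | zero => rw [hcoeff, h0, mul_zero, coeff_zero_X_mul]
    | succ N =>
      rw [hcoeff, coeff_succ_X_mul, h N, Nat.cast_succ, add_assoc, one_add_one_eq_two,
        mul_div_cancel₀ _ (hN N)]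

/-- For `A ≠ 0` and a formal power series `G(t,u,v)` in three variables, the formal
differential equation `A·(t u' + u) = t · G(t, u, t u')` has exactly one solution
`u ∈ ℂ[[t]]` with `u(0) = 0`. -/
theorem stmt_12 (A : ℂ) (hA : A ≠ 0) (G : MvPowerSeries (Fin 3) ℂ) :
    ∃! u : PowerSeries ℂ, PowerSeries.constantCoeff u = 0 ∧
      A • (PowerSeries.X * d⁄dX ℂ u + u) = PowerSeries.X * substG G u := by
  rw [existsUnique_congr (solution_iff_coeff_succ_eq hA G)]
  exact existsUnique_coeff_succ_eq 0 _ fun N u v h => by rw [coeff_substG_congr G h]
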